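/- For a vertex-weighted graph (G,w), XB_{(G,w)} = Σ_π (1+t)^{e(π)} m̃_{λ(π)}, where the sum runs over ALL set partitions π of V(G), e(π) is the number of edges of G with both endpoints in the same block of π, and λ(π) is the partition of total block weights. -/

import Mathlib

open scoped Classical
open Finset

structure WGraph where
  V : Type
  E : Type
  [fV : Fintype V]
  [fE : Fintype E]
  ends : E → Sym2 V
  w : V → ℕ
  wpos : ∀ v, 0 < w v

attribute [instance] WGraph.fV WGraph.fE

namespace WGraph

variable (G : WGraph)

/-- The monomial (exponent vector) attached to a colouring. -/
noncomputable def mono (κ : G.V → ℕ) : ℕ →₀ ℕ := ∑ v : G.V, Finsupp.single (κ v) (G.w v)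

/-- A colouring is proper if the endpoints of every edge receive distinct colours. -/
def Proper {C : Type} (κ : G.V → C) : Prop := ∀ e : G.E, ¬ ((G.ends e).map κ).IsDiag

noncomputable def colorings (d : ℕ →₀ ℕ) : Finset (G.V → ℕ) :=
  (Fintype.piFinset fun _ : G.V => d.support).filter (fun κ => G.mono κ = d)

/-- The chromatic symmetric function of a vertex-weighted graph. -/
noncomputable def X (R : Type) [CommRing R] : MvPowerSeries ℕ R :=
  fun d => (((G.colorings d).filter (fun κ => G.Proper κ)).card : R)

end WGraph
namespace WGraph

/-- The number of monochromatic ("bad") edges of a colouring. -/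
noncomputable def badEdges (G : WGraph) (κ : G.V → ℕ) : ℕ :=
  (Finset.univ.filter fun e : G.E => ((G.ends e).map κ).IsDiag).card

/-- The Tutte (bad-colouring) symmetric function
`XB_{(G,w)} = Σ_κ (1+t)^{e(κ)} Π_v x_{κ(v)}^{w(v)}`, with coefficients in `ℤ[t]`. -/
noncomputable def XB (G : WGraph) : MvPowerSeries ℕ (Polynomial ℤ) :=
  fun d => ∑ κ ∈ G.colorings d, (1 + Polynomial.X) ^ G.badEdges κ

end WGraph
/-- `Π_i r_i(M)!` where `r_i(M)` is the number of parts of `M` equal to `i`. -/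
noncomputable def rFact (M : Multiset ℕ) : ℕ := ∏ i ∈ M.toFinset, Nat.factorial (M.count i)

/-- The augmented monomial symmetric function `m̃_λ = (Π_i r_i(λ)!) m_λ`. -/
noncomputable def augMono (R : Type) [CommRing R] (M : Multiset ℕ) : MvPowerSeries ℕ R :=
  fun d => if d.support.val.map d = M then (rFact M : R) else 0

namespace WGraph

/-- `P` is a set partition of `V(G)`. -/
def IsPartition (G : WGraph) (P : Finset (Finset G.V)) : Prop :=
  (∀ B ∈ P, B.Nonempty) ∧ ∀ v : G.V, ∃! B, B ∈ P ∧ v ∈ B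

/-- `e(π)`: the number of edges of `G` with both endpoints in the same block of `π`. -/
noncomputable def internalEdges (G : WGraph) (P : Finset (Finset G.V)) : ℕ :=
  (Finset.univ.filter fun e : G.E => ∃ B ∈ P, ∀ x ∈ G.ends e, x ∈ B).card

/-- `λ(π)`: the multiset of total weights of the blocks of a partition. -/
noncomputable def blockWeights (G : WGraph) (P : Finset (Finset G.V)) : Multiset ℕ :=
  P.val.map (fun B => ∑ v ∈ B, G.w v)

end WGraph


lemma attach_map_val' {γ : Type} (s : Finset γ) (f : γ → ℕ) :
    (Finset.univ : Finset {x // x ∈ s}).val.map (fun x => f x.1) = s.val.map f := by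
  rw [Finset.univ_eq_attach]
  conv_rhs => rw [← Multiset.attach_map_val s.val]
  rw [Multiset.map_map]
  rfl

lemma rFact_pos (M : Multiset ℕ) : 0 < rFact M :=
  Finset.prod_pos fun _ _ => Nat.factorial_pos _

lemma card_matchings {α β : Type} [Fintype α] [Fintype β] (v : α → ℕ) (u : β → ℕ)
    (h : (Finset.univ.val.map v : Multiset ℕ) = Finset.univ.val.map u) :
    Nat.card {f : α ≃ β // ∀ a, u (f a) = v a}
      = rFact (Finset.univ.val.map v) := by
  classical
  rw [Nat.card_eq_fintype_card]
  set M : Multiset ℕ := Finset.univ.val.map v with hM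
  have hmem₁ : ∀ a : α, v a ∈ M.toFinset := fun a =>
    Multiset.mem_toFinset.mpr (Multiset.mem_map.mpr ⟨a, Finset.mem_univ_val a, rfl⟩)
  have hmem₂ : ∀ b : β, u b ∈ M.toFinset := by
    intro b
    apply Multiset.mem_toFinset.mpr
    show u b ∈ M
    rw [h]
    exact Multiset.mem_map.mpr ⟨b, Finset.mem_univ_val b, rfl⟩
  have key : ∀ (g : ∀ i : M.toFinset, {a : α // v a = i.1} ≃ {b : β // u b = i.1})
      (i j : M.toFinset) (_ : i = j) (x : {b : β // u b = i.1}) (y : {b : β // u b = j.1}),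
      x.1 = y.1 → ((g i).symm x).1 = ((g j).symm y).1 := by
    rintro g i j rfl x y hxy
    exact congrArg (fun z => ((g i).symm z).1) (Subtype.ext hxy)
  have key2 : ∀ (g : ∀ i : M.toFinset, {a : α // v a = i.1} ≃ {b : β // u b = i.1})
      (i j : M.toFinset) (_ : i = j) (x : {a : α // v a = i.1}) (y : {a : α // v a = j.1}),
      x.1 = y.1 → ((g i) x).1 = ((g j) y).1 := by
    rintro g i j rfl x y hxy
    exact congrArg (fun z => ((g i) z).1) (Subtype.ext hxy)
  have Θ : {f : α ≃ β // ∀ a, u (f a) = v a} ≃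
      (∀ i : M.toFinset, {a : α // v a = i.1} ≃ {b : β // u b = i.1}) :=
    { toFun := fun f i => Equiv.subtypeEquiv f.1 (fun a => by rw [f.2 a])
      invFun := fun g =>
        ⟨{ toFun := fun a => (g ⟨v a, hmem₁ a⟩ ⟨a, rfl⟩).1
           invFun := fun b => ((g ⟨u b, hmem₂ b⟩).symm ⟨b, rfl⟩).1
           left_inv := by
             intro a
             have hi : (⟨u ((g ⟨v a, hmem₁ a⟩) ⟨a, rfl⟩).1,
                 hmem₂ _⟩ : M.toFinset) = ⟨v a, hmem₁ a⟩ :=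
               Subtype.ext ((g ⟨v a, hmem₁ a⟩) ⟨a, rfl⟩).2
             exact (key g _ _ hi ⟨_, rfl⟩ _ rfl).trans
               (congrArg Subtype.val (Equiv.symm_apply_apply _ _))
           right_inv := by
             intro b
             have hi : (⟨v (((g ⟨u b, hmem₂ b⟩).symm) ⟨b, rfl⟩).1,
                 hmem₁ _⟩ : M.toFinset) = ⟨u b, hmem₂ b⟩ :=
               Subtype.ext (((g ⟨u b, hmem₂ b⟩).symm) ⟨b, rfl⟩).2
             exact (key2 g _ _ hi ⟨_, rfl⟩ _ rfl).trans
               (congrArg Subtype.val (Equiv.apply_symm_apply _ _)) },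
         fun a => (g ⟨v a, hmem₁ a⟩ ⟨a, rfl⟩).2⟩
      left_inv := by
        intro f
        apply Subtype.ext
        apply Equiv.ext
        intro a
        rfl
      right_inv := by
        intro g
        funext i
        apply Equiv.ext
        intro x
        apply Subtype.ext
        have hi : (⟨v x.1, hmem₁ x.1⟩ : M.toFinset) = i := Subtype.ext x.2
        exact key2 g _ _ hi ⟨x.1, rfl⟩ x rfl }
  rw [Fintype.card_congr Θ, Fintype.card_pi]
  have hc1 : ∀ i : ℕ, Fintype.card {a : α // v a = i} = M.count i := by
    intro i
    rw [Fintype.card_subtype, Finset.card_def, Finset.filter_val, hM, Multiset.count_map]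
    congr 1
    exact Multiset.filter_congr fun a _ => eq_comm
  have hc2 : ∀ i : ℕ, Fintype.card {b : β // u b = i} = M.count i := by
    intro i
    rw [Fintype.card_subtype, Finset.card_def, Finset.filter_val, hM, hM.symm.trans h, Multiset.count_map]
    congr 1
    exact Multiset.filter_congr fun a _ => eq_comm
  have step : ∀ i : M.toFinset,
      Fintype.card ({a : α // v a = i.1} ≃ {b : β // u b = i.1})
        = Nat.factorial (M.count i.1) := by
    intro i
    rw [Fintype.card_equiv (Fintype.equivOfCardEq ((hc1 i.1).trans (hc2 i.1).symm)), hc1]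
  rw [Finset.prod_congr rfl fun i _ => step i]
  unfold rFact
  rw [← Finset.prod_attach M.toFinset (fun i => Nat.factorial (M.count i))]
  rfl


namespace WGraph
variable (G : WGraph)

lemma mono_apply (κ : G.V → ℕ) (c : ℕ) :
    G.mono κ c = ∑ v ∈ Finset.univ.filter (fun v => κ v = c), G.w v := by
  unfold mono
  rw [Finsupp.finset_sum_apply, Finset.sum_filter]
  refine Finset.sum_congr rfl fun v _ => ?_
  rw [Finsupp.single_apply]

noncomputable def blk (κ : G.V → ℕ) (c : ℕ) : Finset G.V :=
  Finset.univ.filter (fun u => κ u = c)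

lemma mem_blk {κ : G.V → ℕ} {c : ℕ} {u : G.V} : u ∈ G.blk κ c ↔ κ u = c := by
  simp [blk]

noncomputable def partOf (κ : G.V → ℕ) : Finset (Finset G.V) :=
  Finset.univ.image (fun v => G.blk κ (κ v))

lemma isPartition_partOf (κ : G.V → ℕ) : G.IsPartition (G.partOf κ) := by
  constructor
  · intro B hB
    obtain ⟨v, -, rfl⟩ := Finset.mem_image.mp hB
    exact ⟨v, G.mem_blk.mpr rfl⟩
  · intro v
    refine ⟨G.blk κ (κ v), ⟨Finset.mem_image_of_mem _ (Finset.mem_univ v), G.mem_blk.mpr rfl⟩, ?_⟩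
    rintro B ⟨hB, hvB⟩
    obtain ⟨u, -, rfl⟩ := Finset.mem_image.mp hB
    have h : κ v = κ u := G.mem_blk.mp hvB
    rw [h]

lemma badEdges_eq_internalEdges (κ : G.V → ℕ) :
    G.badEdges κ = G.internalEdges (G.partOf κ) := by
  unfold badEdges internalEdges
  congr 1
  apply Finset.filter_congr
  intro e _
  induction G.ends e using Sym2.inductionOn with
  | hf a b =>
    simp only [Sym2.map_pair_eq, Sym2.mk_isDiag_iff]
    constructor
    · intro h
      refine ⟨G.blk κ (κ a), Finset.mem_image_of_mem _ (Finset.mem_univ a), fun x hx => ?_⟩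
      rcases Sym2.mem_iff.mp hx with rfl | rfl
      · exact G.mem_blk.mpr rfl
      · exact G.mem_blk.mpr h.symm
    · rintro ⟨B, hB, hx⟩
      obtain ⟨u, -, rfl⟩ := Finset.mem_image.mp hB
      have ha := G.mem_blk.mp (hx a (Sym2.mem_mk_left a b))
      have hb := G.mem_blk.mp (hx b (Sym2.mem_mk_right a b))
      rw [ha, hb]

lemma image_eq_support {d : ℕ →₀ ℕ} {κ : G.V → ℕ} (h : G.mono κ = d) :
    Finset.univ.image κ = d.support := by
  ext c
  rw [Finset.mem_image, Finsupp.mem_support_iff, ← h, mono_apply]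
  constructor
  · rintro ⟨v, -, rfl⟩
    have h1 : G.w v ≤ ∑ u ∈ Finset.univ.filter (fun u => κ u = κ v), G.w u :=
      Finset.single_le_sum (fun u _ => Nat.zero_le _) (by simp)
    have hw := G.wpos v
    omega
  · intro hne
    by_contra hc
    push_neg at hc
    apply hne
    apply Finset.sum_eq_zero
    intro v hv
    exact absurd (Finset.mem_filter.mp hv).2 (hc v (Finset.mem_univ v))

lemma blockWeights_partOf {d : ℕ →₀ ℕ} {κ : G.V → ℕ} (h : G.mono κ = d) :
    G.blockWeights (G.partOf κ) = d.support.val.map d := by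
  have himg : G.partOf κ = d.support.image (fun c => G.blk κ c) := by
    unfold partOf
    rw [← image_eq_support G h, Finset.image_image]
    rfl
  have hinj : Set.InjOn (fun c => G.blk κ c) d.support := by
    intro c1 h1 c2 h2 he
    rw [← image_eq_support G h, Finset.coe_image] at h1
    obtain ⟨v, -, rfl⟩ := h1
    change G.blk κ (κ v) = G.blk κ c2 at he
    have : v ∈ G.blk κ (κ v) := G.mem_blk.mpr rfl
    rw [he] at this
    exact G.mem_blk.mp this
  unfold blockWeights
  rw [himg, Finset.image_val_of_injOn hinj, Multiset.map_map]
  apply Multiset.map_congr rfl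
  intro c hc
  simp only [Function.comp_apply]
  rw [← h, mono_apply]
  rfl


lemma mem_colorings {d : ℕ →₀ ℕ} {κ : G.V → ℕ} : κ ∈ G.colorings d ↔ G.mono κ = d := by
  unfold colorings
  rw [Finset.mem_filter]
  refine ⟨fun h => h.2, fun h => ⟨?_, h⟩⟩
  rw [Fintype.mem_piFinset]
  intro v
  rw [Finsupp.mem_support_iff, ← h, mono_apply]
  have h1 : G.w v ≤ ∑ u ∈ Finset.univ.filter (fun u => κ u = κ v), G.w u :=
    Finset.single_le_sum (fun u _ => Nat.zero_le _) (by simp)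
  have hw := G.wpos v
  omega

lemma card_fiber (d : ℕ →₀ ℕ) (P : Finset (Finset G.V)) (hP : G.IsPartition P) :
    ((G.colorings d).filter (fun κ => G.partOf κ = P)).card
      = Nat.card {f : {B // B ∈ P} ≃ {c // c ∈ d.support} //
          ∀ B : {B // B ∈ P}, d (f B).1 = ∑ v ∈ B.1, G.w v} := by
  classical
  rw [Nat.card_eq_fintype_card]
  obtain ⟨hne, hex⟩ := hP
  choose blkP hblk using hex
  choose vOf hvOf using hne
  have memblk_iff : ∀ (x : G.V) (B : Finset G.V), B ∈ P → (x ∈ B ↔ blkP x = B) := by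
    intro x B hB
    constructor
    · intro hx
      exact ((hblk x).2 B ⟨hB, hx⟩).symm
    · rintro rfl
      exact (hblk x).1.2
  -- facts about κ in the fiber
  have hsupp : ∀ (κ : G.V → ℕ), G.mono κ = d → ∀ x : G.V, κ x ∈ d.support := by
    intro κ hκ x
    rw [← image_eq_support G hκ]
    exact Finset.mem_image_of_mem κ (Finset.mem_univ x)
  have hblkmem : ∀ (κ : G.V → ℕ), G.mono κ = d → G.partOf κ = P →
      ∀ c ∈ d.support, G.blk κ c ∈ P := by
    intro κ hκ hκP c hc
    rw [← image_eq_support G hκ] at hc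
    obtain ⟨x, -, rfl⟩ := Finset.mem_image.mp hc
    rw [← hκP]
    exact Finset.mem_image_of_mem _ (Finset.mem_univ x)
  have hblkeq : ∀ (κ : G.V → ℕ), G.partOf κ = P →
      ∀ (B : Finset G.V) (hB : B ∈ P), G.blk κ (κ (vOf B hB)) = B := by
    intro κ hκP B hB
    have hB' : B ∈ G.partOf κ := by rw [hκP]; exact hB
    obtain ⟨x, -, hBx⟩ := Finset.mem_image.mp hB'
    have h1 : κ (vOf B hB) = κ x := by
      have h3 : vOf B hB ∈ G.blk κ (κ x) := by rw [hBx]; exact hvOf B hB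
      exact G.mem_blk.mp h3
    rw [h1, hBx]
  rw [← Finset.card_univ]
  refine Finset.card_bij'
    (fun κ hκ =>
      (⟨{ toFun := fun B => ⟨κ (vOf B.1 B.2),
            hsupp κ ((G.mem_colorings).mp (Finset.mem_filter.mp hκ).1) _⟩
          invFun := fun c => ⟨G.blk κ c.1,
            hblkmem κ ((G.mem_colorings).mp (Finset.mem_filter.mp hκ).1)
              (Finset.mem_filter.mp hκ).2 c.1 c.2⟩
          left_inv := by
            intro B
            exact Subtype.ext (hblkeq κ (Finset.mem_filter.mp hκ).2 B.1 B.2)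
          right_inv := by
            intro c
            exact Subtype.ext (G.mem_blk.mp (hvOf _ _)) },
        by
          intro B
          have h2 := hblkeq κ (Finset.mem_filter.mp hκ).2 B.1 B.2
          show d (κ (vOf B.1 B.2)) = ∑ v ∈ B.1, G.w v
          rw [← (G.mem_colorings).mp (Finset.mem_filter.mp hκ).1, mono_apply]
          show (∑ v ∈ G.blk κ (κ (vOf B.1 B.2)), G.w v) = _
          rw [h2]⟩ :
        {f : {B // B ∈ P} ≃ {c // c ∈ d.support} //
          ∀ B : {B // B ∈ P}, d (f B).1 = ∑ v ∈ B.1, G.w v}))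
    (fun f _ => fun x => (f.1 ⟨blkP x, (hblk x).1.1⟩).1)
    (fun κ hκ => Finset.mem_univ _)
    ?_ ?_ ?_
  · -- hj : j f ∈ fiber
    intro f _
    set κ' : G.V → ℕ := fun x => (f.1 ⟨blkP x, (hblk x).1.1⟩).1 with hκ'
    have claim2 : ∀ x : G.V, G.blk κ' (κ' x) = blkP x := by
      intro x
      ext y
      rw [G.mem_blk]
      constructor
      · intro hxy
        have : (⟨blkP y, (hblk y).1.1⟩ : {B // B ∈ P}) = ⟨blkP x, (hblk x).1.1⟩ :=
          f.1.injective (Subtype.ext hxy)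
        have h3 : blkP y = blkP x := Subtype.ext_iff.mp this
        rw [← h3]
        exact (hblk y).1.2
      · intro hy
        have h3 : blkP y = blkP x := ((memblk_iff y (blkP x) (hblk x).1.1).mp hy)
        show (f.1 ⟨blkP y, _⟩).1 = (f.1 ⟨blkP x, _⟩).1
        exact congrArg (fun z => (f.1 z).1) (Subtype.ext h3)
    have hmono : G.mono κ' = d := by
      ext c
      rw [mono_apply]
      by_cases hc : c ∈ d.support
      · set C : {c // c ∈ d.support} := ⟨c, hc⟩ with hC
        set B := f.1.symm C with hB
        have hfilter : Finset.univ.filter (fun x => κ' x = c) = B.1 := by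
          ext x
          rw [Finset.mem_filter]
          constructor
          · rintro ⟨-, hx⟩
            have : f.1 ⟨blkP x, (hblk x).1.1⟩ = C := Subtype.ext hx
            have h4 : (⟨blkP x, (hblk x).1.1⟩ : {B // B ∈ P}) = B := by
              rw [hB, Equiv.eq_symm_apply, this]
            have h5 : blkP x = B.1 := Subtype.ext_iff.mp h4
            rw [← h5]
            exact (hblk x).1.2
          · intro hx
            refine ⟨Finset.mem_univ _, ?_⟩
            have h5 : blkP x = B.1 := (memblk_iff x B.1 B.2).mp hx
            have h4 : (⟨blkP x, (hblk x).1.1⟩ : {B // B ∈ P}) = B := Subtype.ext h5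
            show (f.1 ⟨blkP x, _⟩).1 = c
            rw [congrArg (fun z => (f.1 z).1) h4]
            show (f.1 (f.1.symm C)).1 = c
            rw [Equiv.apply_symm_apply]
          -- end
        rw [hfilter]
        have h6 := f.2 B
        rw [hB, Equiv.apply_symm_apply] at h6
        exact h6.symm
      · have hzero : d c = 0 := Finsupp.notMem_support_iff.mp hc
        rw [hzero]
        apply Finset.sum_eq_zero
        intro x hx
        exfalso
        have := (Finset.mem_filter.mp hx).2
        apply hc
        rw [← this]
        exact (f.1 ⟨blkP x, (hblk x).1.1⟩).2
    have hpart : G.partOf κ' = P := by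
      ext B'
      unfold partOf
      constructor
      · intro hB'
        obtain ⟨x, -, rfl⟩ := Finset.mem_image.mp hB'
        rw [claim2 x]
        exact (hblk x).1.1
      · intro hB'
        have hx : vOf B' hB' ∈ B' := hvOf _ _
        have h5 : blkP (vOf B' hB') = B' := (memblk_iff _ B' hB').mp hx
        rw [Finset.mem_image]
        exact ⟨vOf B' hB', Finset.mem_univ _, by rw [claim2, h5]⟩
    rw [Finset.mem_filter]
    exact ⟨(G.mem_colorings).mpr hmono, hpart⟩
  · -- left_inv : j (i κ) = κ
    intro κ hκ
    have hκd : G.mono κ = d := (G.mem_colorings).mp (Finset.mem_filter.mp hκ).1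
    have hκP : G.partOf κ = P := (Finset.mem_filter.mp hκ).2
    funext x
    show κ (vOf (blkP x) (hblk x).1.1) = κ x
    have hbx : G.blk κ (κ (vOf (blkP x) (hblk x).1.1)) = blkP x := hblkeq κ hκP _ _
    have h3 : x ∈ G.blk κ (κ (vOf (blkP x) (hblk x).1.1)) := by
      rw [hbx]; exact (hblk x).1.2
    exact (G.mem_blk.mp h3).symm
  · -- right_inv : i (j f) = f
    intro f _
    apply Subtype.ext
    apply Equiv.ext
    intro B
    apply Subtype.ext
    show (f.1 ⟨blkP (vOf B.1 B.2), _⟩).1 = (f.1 B).1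
    have h5 : blkP (vOf B.1 B.2) = B.1 := (memblk_iff _ B.1 B.2).mp (hvOf _ _)
    exact congrArg (fun z => (f.1 z).1) (Subtype.ext h5)


set_option maxHeartbeats 1000000 in
lemma card_fiber_ite (d : ℕ →₀ ℕ) (P : Finset (Finset G.V)) :
    ((G.colorings d).filter (fun κ => G.partOf κ = P)).card
      = if G.IsPartition P ∧ d.support.val.map d = G.blockWeights P
          then rFact (G.blockWeights P) else 0 := by
  classical
  split_ifs with h
  · obtain ⟨hP, hW⟩ := h
    have h2 : (Finset.univ.val.map (fun B : {B // B ∈ P} => ∑ v ∈ B.1, G.w v) : Multiset ℕ)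
        = Finset.univ.val.map (fun c : {c // c ∈ d.support} => d c.1) := by
      rw [attach_map_val' P (fun B => ∑ v ∈ B, G.w v),
        attach_map_val' d.support (fun c => d c)]
      exact hW.symm
    exact (card_fiber G d P hP).trans ((card_matchings _ _ h2).trans
      (congrArg rFact (attach_map_val' P (fun B => ∑ v ∈ B, G.w v))))
  · rw [Finset.card_eq_zero]
    apply Finset.eq_empty_of_forall_notMem
    intro κ hκ
    apply h
    obtain ⟨h1, h2⟩ := Finset.mem_filter.mp hκ
    have hκd : G.mono κ = d := (G.mem_colorings).mp h1
    constructor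
    · rw [← h2]; exact G.isPartition_partOf κ
    · rw [← h2, blockWeights_partOf G hκd]

end WGraph

set_option maxHeartbeats 1000000 in
/-- **Partition expansion of the Tutte symmetric function**:
`XB_{(G,w)} = Σ_π (1+t)^{e(π)} m̃_{λ(π)}`, the sum over ALL set partitions of `V(G)`. -/
theorem tutte_partition_expansion (G : WGraph) :
    G.XB = ∑ P : Finset (Finset G.V),
      if G.IsPartition P then
        (MvPowerSeries.C : Polynomial ℤ →+* MvPowerSeries ℕ (Polynomial ℤ)) ((1 + Polynomial.X) ^ G.internalEdges P) *
          augMono (Polynomial ℤ) (G.blockWeights P)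
      else 0 := by
  classical
  funext d
  have hrhs : (∑ P : Finset (Finset G.V),
      if G.IsPartition P then
        (MvPowerSeries.C : Polynomial ℤ →+* MvPowerSeries ℕ (Polynomial ℤ)) ((1 + Polynomial.X) ^ G.internalEdges P) *
          augMono (Polynomial ℤ) (G.blockWeights P)
      else 0) d
      = ∑ P : Finset (Finset G.V),
        if G.IsPartition P then
          ((1 + Polynomial.X : Polynomial ℤ)) ^ G.internalEdges P *
            (if d.support.val.map d = G.blockWeights P
              then ((rFact (G.blockWeights P) : Polynomial ℤ)) else 0)
        else 0 := by
    rw [show (∑ P : Finset (Finset G.V),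
      if G.IsPartition P then
        (MvPowerSeries.C : Polynomial ℤ →+* MvPowerSeries ℕ (Polynomial ℤ)) ((1 + Polynomial.X) ^ G.internalEdges P) *
          augMono (Polynomial ℤ) (G.blockWeights P)
      else 0) d = MvPowerSeries.coeff d (∑ P : Finset (Finset G.V),
      if G.IsPartition P then
        (MvPowerSeries.C : Polynomial ℤ →+* MvPowerSeries ℕ (Polynomial ℤ)) ((1 + Polynomial.X) ^ G.internalEdges P) *
          augMono (Polynomial ℤ) (G.blockWeights P)
      else 0) from rfl]
    rw [map_sum]
    refine Finset.sum_congr rfl fun P _ => ?_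
    rw [apply_ite (MvPowerSeries.coeff (R := Polynomial ℤ) d), map_zero,
      MvPowerSeries.coeff_C_mul]
    rfl
  rw [hrhs]
  show (∑ κ ∈ G.colorings d, ((1 + Polynomial.X : Polynomial ℤ)) ^ G.badEdges κ) = _
  rw [← Finset.sum_fiberwise (G.colorings d) (fun κ => G.partOf κ)
    (fun κ => ((1 + Polynomial.X : Polynomial ℤ)) ^ G.badEdges κ)]
  refine Finset.sum_congr rfl fun P _ => ?_
  have hterm : ∀ κ ∈ (G.colorings d).filter (fun κ => G.partOf κ = P),
      ((1 + Polynomial.X : Polynomial ℤ)) ^ G.badEdges κ = ((1 + Polynomial.X : Polynomial ℤ)) ^ G.internalEdges P := by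
    intro κ hκ
    rw [G.badEdges_eq_internalEdges κ, (Finset.mem_filter.mp hκ).2]
  rw [Finset.sum_congr rfl hterm, Finset.sum_const, G.card_fiber_ite d P]
  by_cases hA : G.IsPartition P <;>
    by_cases hB : Multiset.map (⇑d) d.support.val = G.blockWeights P <;>
    simp [hA, hB, nsmul_eq_mul, mul_comm]
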